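/- arXiv:chao-dyn/9303006 — 2 statements merged into one kernel-verified Lean document; each statement's English description precedes it below -/
import Mathlib

section
/- The sum of two dynamical systems that are factors of finite automata is itself a factor of a finite automaton: if (Y₀,g₀) and (Y₁,g₁) are each factors of finite automata, then the disjoint union Y = Y₀ ⊔ Y₁ with the map g(y) = gᵢ(y) for y ∈ Yᵢ is a factor of a finite automaton. -/
open Set Function Topology

/-- The ω-limit set of a set `A` under `f`: `ω(A) = ⋂ₙ closure (⋃_{m>n} f^m(A))`. -/
def omegaSet {X : Type*} [TopologicalSpace X] (f : X → X) (A : Set X) : Set X :=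
  ⋂ n : ℕ, closure (⋃ m : ℕ, ⋃ _ : n < m, f^[m] '' A)

/-- A dynamical system is chaotic if its periodic points are dense and it is
topologically transitive. -/
def IsChaotic {X : Type*} [TopologicalSpace X] (f : X → X) : Prop :=
  Dense {x : X | ∃ n : ℕ, 0 < n ∧ f^[n] x = x} ∧
  ∀ U V : Set X, IsOpen U → IsOpen V → U.Nonempty → V.Nonempty →
    ∃ k : ℕ, 0 < k ∧ (f^[k] '' U ∩ V).Nonempty

/-- `f` restricted to the invariant set `S` is a chaotic dynamical system. -/
def ChaoticOn {X : Type*} [TopologicalSpace X] (f : X → X) (S : Set X) : Prop :=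
  ∃ h : MapsTo f S S, IsChaotic (MapsTo.restrict f S S h)

/-- A system has chaotic limits if every point belongs to a set whose ω-limit set is
a chaotic system. -/
def HasChaoticLimits {X : Type*} [TopologicalSpace X] (f : X → X) : Prop :=
  ∀ x : X, ∃ A : Set X, x ∈ A ∧ ChaoticOn f (omegaSet f A)
/-- The discontinuum over `A, Q, B`: two-sided sequences with letters from `A` at
positive coordinates, a letter from `Q` at coordinate `0`, and letters from `B` at
negative coordinates. -/
def Discontinuum (A Q B : Type*) : Type _ :=
  {u : ℤ → A ⊕ Q ⊕ B //
    (∀ i : ℤ, 0 < i → ∃ a : A, u i = Sum.inl a) ∧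
    (∃ q : Q, u 0 = Sum.inr (Sum.inl q)) ∧
    (∀ i : ℤ, i < 0 → ∃ b : B, u i = Sum.inr (Sum.inr b))}

/-- The topology of the discontinuum: the product topology of the discrete topologies,
i.e. the topology of the metric ρ(u,v) = 2^{-inf{i ≥ 0 : uᵢ ≠ vᵢ or u₋ᵢ ≠ v₋ᵢ}}. -/
instance (A Q B : Type*) : TopologicalSpace (Discontinuum A Q B) := by
  letI : TopologicalSpace (A ⊕ Q ⊕ B) := ⊥
  unfold Discontinuum
  infer_instance

/-- The inner state of the automaton, i.e. the coordinate `u 0`. -/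
noncomputable def Discontinuum.state {A Q B : Type*} (u : Discontinuum A Q B) : Q :=
  u.2.2.1.choose

/-- The next input symbol, i.e. the coordinate `u 1`. -/
noncomputable def Discontinuum.input {A Q B : Type*} (u : Discontinuum A Q B) : A :=
  (u.2.1 1 one_pos).choose

/-- The dynamical system of a finite automaton with input function `fA` and output
function `fB`: it reads a symbol from the input tape, changes its state, and writes
a symbol to the output tape. -/
noncomputable def autMap {A Q B : Type*} (fA : Q × A → Q) (fB : Q → B)
    (u : Discontinuum A Q B) : Discontinuum A Q B :=
  ⟨fun i =>
    if i = -1 then Sum.inr (Sum.inr (fB u.state))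
    else if i = 0 then Sum.inr (Sum.inl (fA (u.state, u.input)))
    else u.1 (i + 1), by
      refine ⟨fun i hi => ?_, ?_, fun i hi => ?_⟩
      · beta_reduce
        rw [if_neg (by omega), if_neg (by omega)]
        exact u.2.1 (i + 1) (by omega)
      · exact ⟨fA (u.state, u.input), by beta_reduce; rw [if_neg (by norm_num), if_pos rfl]⟩
      · by_cases h : i = -1
        · exact ⟨fB u.state, by beta_reduce; rw [if_pos h]⟩
        · beta_reduce
          rw [if_neg h, if_neg (by omega)]
          exact u.2.2.2 (i + 1) (by omega)⟩

/-- A dynamical system `g` is a factor of a finite automaton if there are nonempty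
finite sets `A, Q, B`, input and output functions `fA, fB`, and a continuous
surjection `φ` from the corresponding finite automaton onto `(Y, g)` with
`g ∘ φ = φ ∘ f`. -/
def IsFactorOfFiniteAutomaton {Y : Type*} [TopologicalSpace Y] (g : Y → Y) : Prop :=
  ∃ (A Q B : Type) (_ : Fintype A) (_ : Fintype Q) (_ : Fintype B)
    (_ : Nonempty A) (_ : Nonempty Q) (_ : Nonempty B)
    (fA : Q × A → Q) (fB : Q → B) (φ : Discontinuum A Q B → Y),
    Continuous φ ∧ Surjective φ ∧ g ∘ φ = φ ∘ autMap fA fB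


section Aux

variable {A Q B A' Q' B' : Type*}

lemma Discontinuum.state_spec (u : Discontinuum A Q B) :
    u.1 0 = Sum.inr (Sum.inl u.state) := u.2.2.1.choose_spec

lemma Discontinuum.input_spec (u : Discontinuum A Q B) :
    u.1 1 = Sum.inl u.input := (u.2.1 1 one_pos).choose_spec

lemma Discontinuum.state_eq {u : Discontinuum A Q B} {q : Q}
    (h : u.1 0 = Sum.inr (Sum.inl q)) : u.state = q := by
  have h2 := u.state_spec
  rw [h] at h2
  simpa using h2.symm

lemma Discontinuum.input_eq {u : Discontinuum A Q B} {a : A}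
    (h : u.1 1 = Sum.inl a) : u.input = a := by
  have h2 := u.input_spec
  rw [h] at h2
  simpa using h2.symm

/-- Map a discontinuum letterwise. -/
def Discontinuum.map (mA : A → A') (mQ : Q → Q') (mB : B → B')
    (u : Discontinuum A Q B) : Discontinuum A' Q' B' :=
  ⟨fun i => Sum.map mA (Sum.map mQ mB) (u.1 i), by
    refine ⟨fun i hi => ?_, ?_, fun i hi => ?_⟩
    · obtain ⟨a, ha⟩ := u.2.1 i hi
      exact ⟨mA a, by simp [ha]⟩
    · obtain ⟨q, hq⟩ := u.2.2.1
      exact ⟨mQ q, by simp [hq]⟩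
    · obtain ⟨b, hb⟩ := u.2.2.2 i hi
      exact ⟨mB b, by simp [hb]⟩⟩

lemma Discontinuum.map_coe (mA : A → A') (mQ : Q → Q') (mB : B → B')
    (u : Discontinuum A Q B) (i : ℤ) :
    (u.map mA mQ mB).1 i = Sum.map mA (Sum.map mQ mB) (u.1 i) := rfl

lemma Discontinuum.state_map (mA : A → A') (mQ : Q → Q') (mB : B → B')
    (u : Discontinuum A Q B) : (u.map mA mQ mB).state = mQ u.state :=
  Discontinuum.state_eq (by rw [Discontinuum.map_coe, u.state_spec]; rfl)

lemma Discontinuum.input_map (mA : A → A') (mQ : Q → Q') (mB : B → B')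
    (u : Discontinuum A Q B) : (u.map mA mQ mB).input = mA u.input :=
  Discontinuum.input_eq (by rw [Discontinuum.map_coe, u.input_spec]; rfl)

lemma Discontinuum.continuous_map (mA : A → A') (mQ : Q → Q') (mB : B → B') :
    Continuous (Discontinuum.map mA mQ mB : Discontinuum A Q B → Discontinuum A' Q' B') := by
  letI : TopologicalSpace (A ⊕ Q ⊕ B) := ⊥
  letI : TopologicalSpace (A' ⊕ Q' ⊕ B') := ⊥
  haveI : DiscreteTopology (A ⊕ Q ⊕ B) := ⟨rfl⟩
  haveI : DiscreteTopology (A' ⊕ Q' ⊕ B') := ⟨rfl⟩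
  apply Continuous.subtype_mk
  refine continuous_pi fun i => ?_
  have hv : Continuous (fun u : Discontinuum A Q B => (u.1 : ℤ → A ⊕ Q ⊕ B)) :=
    continuous_subtype_val
  have ha : Continuous (fun f : ℤ → A ⊕ Q ⊕ B => f i) := continuous_apply i
  exact continuous_of_discreteTopology.comp (ha.comp hv)

lemma Discontinuum.map_autMap (mA : A → A') (mQ : Q → Q') (mB : B → B')
    (fA : Q × A → Q) (fB : Q → B) (fA' : Q' × A' → Q') (fB' : Q' → B')
    (u : Discontinuum A Q B)
    (h1 : fA' (mQ u.state, mA u.input) = mQ (fA (u.state, u.input)))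
    (h2 : fB' (mQ u.state) = mB (fB u.state)) :
    (autMap fA fB u).map mA mQ mB = autMap fA' fB' (u.map mA mQ mB) := by
  apply Subtype.ext
  funext i
  show Sum.map mA (Sum.map mQ mB) ((autMap fA fB u).1 i) = (autMap fA' fB' (u.map mA mQ mB)).1 i
  have e1 : (autMap fA fB u).1 i =
      if i = -1 then Sum.inr (Sum.inr (fB u.state))
      else if i = 0 then Sum.inr (Sum.inl (fA (u.state, u.input)))
      else u.1 (i + 1) := rfl
  have e2 : (autMap fA' fB' (u.map mA mQ mB)).1 i =
      if i = -1 then Sum.inr (Sum.inr (fB' (u.map mA mQ mB).state))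
      else if i = 0 then Sum.inr (Sum.inl (fA' ((u.map mA mQ mB).state, (u.map mA mQ mB).input)))
      else (u.map mA mQ mB).1 (i + 1) := rfl
  rw [e1, e2, Discontinuum.state_map, Discontinuum.input_map, Discontinuum.map_coe]
  by_cases hi : i = -1
  · simp [hi, h2]
  · by_cases h0 : i = 0
    · simp [hi, h0, h1]
    · simp [hi, h0]

lemma Discontinuum.state_autMap (fA : Q × A → Q) (fB : Q → B) (u : Discontinuum A Q B) :
    (autMap fA fB u).state = fA (u.state, u.input) :=
  Discontinuum.state_eq (by
    show (if (0 : ℤ) = -1 then Sum.inr (Sum.inr (fB u.state))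
      else if (0 : ℤ) = 0 then Sum.inr (Sum.inl (fA (u.state, u.input)))
      else u.1 (0 + 1)) = Sum.inr (Sum.inl (fA (u.state, u.input)))
    norm_num)

/-- Left projection with a default value. -/
noncomputable def sumProjL {α β : Type*} [Nonempty α] : α ⊕ β → α :=
  Sum.elim id fun _ => Classical.arbitrary α

/-- Right projection with a default value. -/
noncomputable def sumProjR {α β : Type*} [Nonempty β] : α ⊕ β → β :=
  Sum.elim (fun _ => Classical.arbitrary β) id

@[simp] lemma sumProjL_inl {α β : Type*} [Nonempty α] (a : α) :
    (sumProjL (Sum.inl a : α ⊕ β)) = a := rfl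

@[simp] lemma sumProjR_inr {α β : Type*} [Nonempty β] (b : β) :
    (sumProjR (Sum.inr b : α ⊕ β)) = b := rfl

end Aux

/-- The sum of two dynamical systems which are factors of finite automata is itself
a factor of a finite automaton. -/
theorem sum_isFactorOfFiniteAutomaton {Y₀ Y₁ : Type*}
    [MetricSpace Y₀] [CompactSpace Y₀] [MetricSpace Y₁] [CompactSpace Y₁]
    (g₀ : Y₀ → Y₀) (g₁ : Y₁ → Y₁) (hg₀ : Continuous g₀) (hg₁ : Continuous g₁)
    (h₀ : IsFactorOfFiniteAutomaton g₀) (h₁ : IsFactorOfFiniteAutomaton g₁) :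
    IsFactorOfFiniteAutomaton (Sum.map g₀ g₁) := by
  classical
  obtain ⟨A₀, Q₀, B₀, iA₀, iQ₀, iB₀, nA₀, nQ₀, nB₀, fA₀, fB₀, φ₀, hc₀, hs₀, he₀⟩ := h₀
  obtain ⟨A₁, Q₁, B₁, iA₁, iQ₁, iB₁, nA₁, nQ₁, nB₁, fA₁, fB₁, φ₁, hc₁, hs₁, he₁⟩ := h₁
  letI := iA₀; letI := iQ₀; letI := iB₀; letI := iA₁; letI := iQ₁; letI := iB₁
  letI := nA₀; letI := nQ₀; letI := nB₀; letI := nA₁; letI := nQ₁; letI := nB₁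
  -- the combined automaton
  set F : (Q₀ ⊕ Q₁) × (A₀ ⊕ A₁) → Q₀ ⊕ Q₁ := fun p =>
    Sum.elim (fun q => Sum.inl (fA₀ (q, sumProjL p.2))) (fun q => Sum.inr (fA₁ (q, sumProjR p.2))) p.1
    with hF
  set FB : Q₀ ⊕ Q₁ → B₀ ⊕ B₁ := Sum.map fB₀ fB₁ with hFB
  set r₀ : Discontinuum (A₀ ⊕ A₁) (Q₀ ⊕ Q₁) (B₀ ⊕ B₁) → Discontinuum A₀ Q₀ B₀ :=
    Discontinuum.map sumProjL sumProjL sumProjL with hr₀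
  set r₁ : Discontinuum (A₀ ⊕ A₁) (Q₀ ⊕ Q₁) (B₀ ⊕ B₁) → Discontinuum A₁ Q₁ B₁ :=
    Discontinuum.map sumProjR sumProjR sumProjR with hr₁
  set φ : Discontinuum (A₀ ⊕ A₁) (Q₀ ⊕ Q₁) (B₀ ⊕ B₁) → Y₀ ⊕ Y₁ := fun u =>
    if u.state.isLeft then Sum.inl (φ₀ (r₀ u)) else Sum.inr (φ₁ (r₁ u)) with hφ
  refine ⟨A₀ ⊕ A₁, Q₀ ⊕ Q₁, B₀ ⊕ B₁, inferInstance, inferInstance, inferInstance,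
    inferInstance, inferInstance, inferInstance, F, FB, φ, ?_, ?_, ?_⟩
  · -- continuity
    have hclopen : IsClopen {u : Discontinuum (A₀ ⊕ A₁) (Q₀ ⊕ Q₁) (B₀ ⊕ B₁) |
        u.state.isLeft = true} := by
      letI : TopologicalSpace (((A₀ ⊕ A₁)) ⊕ ((Q₀ ⊕ Q₁)) ⊕ ((B₀ ⊕ B₁))) := ⊥
      haveI : DiscreteTopology (((A₀ ⊕ A₁)) ⊕ ((Q₀ ⊕ Q₁)) ⊕ ((B₀ ⊕ B₁))) := ⟨rfl⟩
      have hv : Continuous (fun u : Discontinuum (A₀ ⊕ A₁) (Q₀ ⊕ Q₁) (B₀ ⊕ B₁) =>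
          (u.1 : ℤ → ((A₀ ⊕ A₁)) ⊕ ((Q₀ ⊕ Q₁)) ⊕ ((B₀ ⊕ B₁)))) := continuous_subtype_val
      have ha : Continuous (fun f : ℤ → ((A₀ ⊕ A₁)) ⊕ ((Q₀ ⊕ Q₁)) ⊕ ((B₀ ⊕ B₁)) => f 0) :=
        continuous_apply 0
      have hc : Continuous (fun u : Discontinuum (A₀ ⊕ A₁) (Q₀ ⊕ Q₁) (B₀ ⊕ B₁) => u.1 0) :=
        ha.comp hv
      have hset : {u : Discontinuum (A₀ ⊕ A₁) (Q₀ ⊕ Q₁) (B₀ ⊕ B₁) | u.state.isLeft = true} =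
          (fun u : Discontinuum (A₀ ⊕ A₁) (Q₀ ⊕ Q₁) (B₀ ⊕ B₁) => u.1 0) ⁻¹'
            {x | ∃ q : Q₀, x = Sum.inr (Sum.inl (Sum.inl q))} := by
        ext u
        simp only [Set.mem_setOf_eq, Set.mem_preimage, u.state_spec, Sum.isLeft_iff]
        constructor
        · rintro ⟨q, hq⟩; exact ⟨q, by rw [hq]⟩
        · rintro ⟨q, hq⟩
          exact ⟨q, by simpa using hq⟩
      rw [hset]
      exact ⟨(isClosed_discrete _).preimage hc, (isOpen_discrete _).preimage hc⟩
    rw [hφ]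
    apply Continuous.if
    · intro a ha
      rw [hclopen.frontier_eq] at ha
      exact absurd ha (Set.notMem_empty a)
    · exact continuous_inl.comp (hc₀.comp (Discontinuum.continuous_map _ _ _))
    · exact continuous_inr.comp (hc₁.comp (Discontinuum.continuous_map _ _ _))
  · -- surjectivity
    have hrι₀ : ∀ u₀ : Discontinuum A₀ Q₀ B₀,
        r₀ (u₀.map Sum.inl Sum.inl Sum.inl) = u₀ := by
      intro u₀
      apply Subtype.ext
      funext i
      show Sum.map sumProjL (Sum.map sumProjL sumProjL)
        (Sum.map Sum.inl (Sum.map Sum.inl Sum.inl) (u₀.1 i)) = u₀.1 i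
      rcases u₀.1 i with a | q | b <;> rfl
    have hrι₁ : ∀ u₁ : Discontinuum A₁ Q₁ B₁,
        r₁ (u₁.map Sum.inr Sum.inr Sum.inr) = u₁ := by
      intro u₁
      apply Subtype.ext
      funext i
      show Sum.map sumProjR (Sum.map sumProjR sumProjR)
        (Sum.map Sum.inr (Sum.map Sum.inr Sum.inr) (u₁.1 i)) = u₁.1 i
      rcases u₁.1 i with a | q | b <;> rfl
    rintro (y₀ | y₁)
    · obtain ⟨u₀, hu₀⟩ := hs₀ y₀
      refine ⟨u₀.map (Sum.inl : A₀ → A₀ ⊕ A₁) (Sum.inl : Q₀ → Q₀ ⊕ Q₁)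
        (Sum.inl : B₀ → B₀ ⊕ B₁), ?_⟩
      have hst : (u₀.map (Sum.inl : A₀ → A₀ ⊕ A₁) (Sum.inl : Q₀ → Q₀ ⊕ Q₁)
          (Sum.inl : B₀ → B₀ ⊕ B₁)).state = Sum.inl u₀.state :=
        Discontinuum.state_map _ _ _ _
      rw [hφ]
      simp only [hst, Sum.isLeft_inl, if_true, hrι₀ u₀, hu₀]
    · obtain ⟨u₁, hu₁⟩ := hs₁ y₁
      refine ⟨u₁.map (Sum.inr : A₁ → A₀ ⊕ A₁) (Sum.inr : Q₁ → Q₀ ⊕ Q₁)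
        (Sum.inr : B₁ → B₀ ⊕ B₁), ?_⟩
      have hst : (u₁.map (Sum.inr : A₁ → A₀ ⊕ A₁) (Sum.inr : Q₁ → Q₀ ⊕ Q₁)
          (Sum.inr : B₁ → B₀ ⊕ B₁)).state = Sum.inr u₁.state :=
        Discontinuum.state_map _ _ _ _
      rw [hφ]
      simp only [hst, Sum.isLeft_inr, Bool.false_eq_true, if_false, hrι₁ u₁, hu₁]
  · -- equivariance
    funext u
    show Sum.map g₀ g₁ (φ u) = φ (autMap F FB u)
    have hstf : (autMap F FB u).state = F (u.state, u.input) :=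
      Discontinuum.state_autMap F FB u
    rcases hq : u.state with q₀ | q₁
    · have hcond : u.state.isLeft = true := by rw [hq]; rfl
      have hcond' : (autMap F FB u).state.isLeft = true := by
        rw [hstf, hF]; simp [hq]
      have hmain : r₀ (autMap F FB u) = autMap fA₀ fB₀ (r₀ u) := by
        rw [hr₀]
        refine Discontinuum.map_autMap _ _ _ F FB fA₀ fB₀ u ?_ ?_
        · rw [hq, hF]; rfl
        · rw [hq, hFB]; rfl
      have h0 : g₀ (φ₀ (r₀ u)) = φ₀ (autMap fA₀ fB₀ (r₀ u)) := congrFun he₀ (r₀ u)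
      rw [hφ]
      simp only [hcond, hcond', if_true, Sum.map_inl, h0, hmain]
    · have hcond : u.state.isLeft = true ↔ False := by rw [hq]; simp
      have hcond' : (autMap F FB u).state.isLeft = true ↔ False := by
        rw [hstf, hF]; simp [hq]
      have hmain : r₁ (autMap F FB u) = autMap fA₁ fB₁ (r₁ u) := by
        rw [hr₁]
        refine Discontinuum.map_autMap _ _ _ F FB fA₁ fB₁ u ?_ ?_
        · rw [hq, hF]; rfl
        · rw [hq, hFB]; rfl
      have h1 : g₁ (φ₁ (r₁ u)) = φ₁ (autMap fA₁ fB₁ (r₁ u)) := congrFun he₁ (r₁ u)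
      rw [hφ]
      simp only [hcond, hcond', if_false, Sum.map_inr, h1, hmain]
end

section
/- Any factor of a finite automaton is clopen-regular: if (Y,g) is a dynamical system and there exist a finite automaton (X,f) and a continuous surjection φ : X → Y with g ∘ φ = φ ∘ f, then L(g,α) is regular for every finite clopen cover α of Y. -/
open Set Function Topology

/-- The language generated by a family `α` of subsets of `X`: all finite words
`u ∈ α*` such that some `x ∈ X` has itinerary `u`, i.e. `f^i(x) ∈ uᵢ` for `i < |u|`. -/
def genLanguage {X : Type*} (f : X → X) (α : Set (Set X)) : Language ↥α :=
  {w : List ↥α | ∃ x : X, ∀ i : Fin w.length, f^[(i : ℕ)] x ∈ (w.get i : Set X)}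

/-- A dynamical system is clopen-regular if the language generated by every finite
clopen cover is regular. -/
def ClopenRegular {X : Type*} [TopologicalSpace X] (f : X → X) : Prop :=
  ∀ α : Set (Set X), α.Finite → (∀ S ∈ α, IsClopen S) → ⋃₀ α = Set.univ →
    (genLanguage f α).IsRegular

/-!
A clopen subset of the discontinuum is compact, hence determined by a finite window `[-N, N]`
of coordinates. Pulling the cover back along `φ`, the language of `g` becomes the itinerary
language of the automaton for a cover by window-determined sets. The left quotient of such a
language by a letter `a` is the itinerary language started from `f '' (T ∩ C a)`, and since the
automaton reads its input tape only forward, any future compatible with the current window can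
be grafted onto any past with that window: the starting set may be replaced by its saturation
under the window map. So all left quotients are indexed by sets of windows, of which there are
finitely many, and the Myhill–Nerode theorem applies.
-/

def itineraryLanguage {X ι : Type*} (f : X → X) (C : ι → Set X) (T : Set X) : Language ι :=
  {w | ∃ x ∈ T, ∀ i : Fin w.length, f^[i] x ∈ C (w.get i)}

section Itinerary

variable {X ι : Type*} {f : X → X} {C : ι → Set X}

theorem mem_itineraryLanguage {T : Set X} {w : List ι} :
    w ∈ itineraryLanguage f C T ↔ ∃ x ∈ T, ∀ i : Fin w.length, f^[i] x ∈ C (w.get i) :=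
  Iff.rfl

theorem cons_mem_itineraryLanguage {T : Set X} {a : ι} {w : List ι} :
    a :: w ∈ itineraryLanguage f C T ↔ w ∈ itineraryLanguage f C (f '' (T ∩ C a)) := by
  simp only [mem_itineraryLanguage, List.length_cons, Fin.forall_fin_succ,
    Fin.val_zero, iterate_zero, id_eq, List.get_eq_getElem, Fin.val_succ,
    List.getElem_cons_zero, List.getElem_cons_succ, iterate_succ_apply, mem_image, mem_inter_iff]
  constructor
  · rintro ⟨x, hxT, hxa, hw⟩
    exact ⟨f x, ⟨x, ⟨hxT, hxa⟩, rfl⟩, hw⟩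
  · rintro ⟨_, ⟨x, ⟨hxT, hxa⟩, rfl⟩, hw⟩
    exact ⟨x, hxT, hxa, hw⟩

theorem itineraryLanguage_mono {T T' : Set X} (h : T ⊆ T') :
    itineraryLanguage f C T ≤ itineraryLanguage f C T' :=
  fun _ ⟨x, hx, hw⟩ => ⟨x, h hx, hw⟩

theorem itineraryLanguage_image_of_semiconj {Y : Type*} {g : Y → Y} {φ : X → Y}
    (h : Semiconj φ f g) (C : ι → Set Y) (T : Set X) :
    itineraryLanguage g C (φ '' T) = itineraryLanguage f (fun i => φ ⁻¹' C i) T := by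
  ext w
  simp only [mem_itineraryLanguage, exists_mem_image, mem_preimage,
    (h.iterate_right _).eq]

theorem genLanguage_eq_itineraryLanguage (f : X → X) (α : Set (Set X)) :
    genLanguage f α = itineraryLanguage f (↑) univ := by
  ext w
  simp only [genLanguage, mem_itineraryLanguage, mem_univ, true_and]
  rfl

variable {σ : Type*} {π : X → σ}

/-- Markov property of the coding `π`: given the present state, the future states do not depend
on the past. -/
def IsMarkov (π : X → σ) (f : X → X) : Prop :=
  ∀ x y, π (f y) = π x → ∃ z, π z = π y ∧ ∀ k, π (f^[k] (f z)) = π (f^[k] x)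

theorem itineraryLanguage_leftQuotient
    (hC : ∀ i x y, π x = π y → x ∈ C i → y ∈ C i) (hπ : IsMarkov π f) (S : Set σ) (u : List ι) :
    ∃ S' : Set σ, (itineraryLanguage f C (π ⁻¹' S)).leftQuotient u =
      itineraryLanguage f C (π ⁻¹' S') := by
  induction u generalizing S with
  | nil => exact ⟨S, rfl⟩
  | cons a u ih =>
    obtain ⟨S', hS'⟩ := ih (π '' (f '' (π ⁻¹' S ∩ C a)))
    refine ⟨S', ?_⟩
    rw [← hS', ← List.singleton_append, Language.leftQuotient_append]
    congr 1
    ext w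
    rw [Language.mem_leftQuotient, List.singleton_append, cons_mem_itineraryLanguage]
    refine ⟨fun hw => itineraryLanguage_mono (subset_preimage_image _ _) hw, ?_⟩
    rintro ⟨x, ⟨_, ⟨y, ⟨hyS, hya⟩, rfl⟩, hxy⟩, hw⟩
    obtain ⟨z, hzy, hzx⟩ := hπ x y hxy
    exact ⟨f z, ⟨z, ⟨by simpa [hzy] using hyS, hC a y z hzy.symm hya⟩, rfl⟩,
      fun i => hC _ _ _ (hzx i).symm (hw i)⟩

theorem itineraryLanguage_isRegular [Finite σ]
    (hC : ∀ i x y, π x = π y → x ∈ C i → y ∈ C i) (hπ : IsMarkov π f) (S : Set σ) :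
    (itineraryLanguage f C (π ⁻¹' S)).IsRegular := by
  refine Language.IsRegular.of_finite_range_leftQuotient <|
    (finite_range fun S' : Set σ => itineraryLanguage f C (π ⁻¹' S')).subset ?_
  rintro _ ⟨u, rfl⟩
  exact (itineraryLanguage_leftQuotient hC hπ S u).imp fun _ h => h.symm

end Itinerary

theorem exists_forall_mem_of_eq_of_isClopen {X ι : Type*} [TopologicalSpace X] [CompactSpace X]
    [Finite ι] {σ : ℕ → Type*} (π : ∀ n, X → σ n) (hopen : ∀ n x, IsOpen {y | π n y = π n x})
    (hmono : ∀ m n x y, m ≤ n → π n x = π n y → π m x = π m y)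
    (hnhds : ∀ x, ∀ s ∈ 𝓝 x, ∃ n, {y | π n y = π n x} ⊆ s)
    {C : ι → Set X} (hC : ∀ i, IsClopen (C i)) :
    ∃ n, ∀ i x y, π n x = π n y → x ∈ C i → y ∈ C i := by
  let D n := {x | ∀ i y, π n y = π n x → (y ∈ C i ↔ x ∈ C i)}
  have hDopen n : IsOpen (D n) := by
    refine isOpen_iff_forall_mem_open.mpr fun x hx => ⟨_, fun y hy i z hz => ?_, hopen n x, rfl⟩
    rw [hx i z (hz.trans hy), hx i y hy]
  have hDcover : univ ⊆ ⋃ n, D n := by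
    intro x _
    have hnear i : {y | y ∈ C i ↔ x ∈ C i} ∈ 𝓝 x := by
      by_cases hx : x ∈ C i
      · filter_upwards [(hC i).isOpen.mem_nhds hx] with y hy using iff_of_true hy hx
      · filter_upwards [(hC i).compl.isOpen.mem_nhds hx] with y hy using iff_of_false hy hx
    have : {y | ∀ i, y ∈ C i ↔ x ∈ C i} ∈ 𝓝 x := by
      simpa only [ofPred_forall] using Filter.iInter_mem.mpr hnear
    obtain ⟨n, hn⟩ := hnhds x _ this
    exact mem_iUnion.mpr ⟨n, fun i y hy => hn hy i⟩
  have hDmono : Monotone D := fun m n hmn x hx i y hy => hx i y (hmono m n y x hmn hy)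
  obtain ⟨n, hn⟩ := isCompact_univ.elim_directed_cover D hDopen hDcover hDmono.directed_le
  exact ⟨n, fun i x y hxy hx => ((hn (mem_univ y)) i x hxy).mp hx⟩

namespace Discontinuum

variable {A Q B : Type*}

theorem val_zero (u : Discontinuum A Q B) : u.1 0 = Sum.inr (Sum.inl u.state) :=
  u.2.2.1.choose_spec

theorem val_one (u : Discontinuum A Q B) : u.1 1 = Sum.inl u.input :=
  (u.2.1 1 one_pos).choose_spec

theorem isCompact_carrier [Finite A] [Finite Q] [Finite B] :
    letI : TopologicalSpace (A ⊕ Q ⊕ B) := ⊥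
    IsCompact {u : ℤ → A ⊕ Q ⊕ B |
      (∀ i : ℤ, 0 < i → ∃ a : A, u i = Sum.inl a) ∧
      (∃ q : Q, u 0 = Sum.inr (Sum.inl q)) ∧
      (∀ i : ℤ, i < 0 → ∃ b : B, u i = Sum.inr (Sum.inr b))} := by
  let _ : TopologicalSpace (A ⊕ Q ⊕ B) := ⊥
  have _ : DiscreteTopology (A ⊕ Q ⊕ B) := ⟨rfl⟩
  have hcoord (i : ℤ) (s : Set (A ⊕ Q ⊕ B)) : IsClosed {u : ℤ → A ⊕ Q ⊕ B | u i ∈ s} :=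
    (isClosed_discrete s).preimage (continuous_apply i)
  simp only [ofPred_and, ofPred_forall]
  refine IsClosed.isCompact <|
    (isClosed_iInter fun i => isClosed_iInter fun _ => hcoord i {s | ∃ a, s = Sum.inl a}).inter <|
    (hcoord 0 {s | ∃ q, s = Sum.inr (Sum.inl q)}).inter <|
    isClosed_iInter fun i => isClosed_iInter fun _ => hcoord i {s | ∃ b, s = Sum.inr (Sum.inr b)}

instance [Finite A] [Finite Q] [Finite B] : CompactSpace (Discontinuum A Q B) := by
  let _ : TopologicalSpace (A ⊕ Q ⊕ B) := ⊥
  exact isCompact_iff_compactSpace.mp isCompact_carrier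

def window (N : ℕ) (u : Discontinuum A Q B) : Icc (-(N : ℤ)) N → A ⊕ Q ⊕ B :=
  (Icc (-(N : ℤ)) N).domRestrict u.1

theorem window_eq_window_iff {N : ℕ} {u v : Discontinuum A Q B} :
    window N u = window N v ↔ EqOn u.1 v.1 (Icc (-(N : ℤ)) N) :=
  domRestrict_eq_domRestrict_iff

theorem window_eq_window_of_le {m n : ℕ} {u v : Discontinuum A Q B} (hmn : m ≤ n)
    (h : window n u = window n v) : window m u = window m v :=
  window_eq_window_iff.mpr <| (window_eq_window_iff.mp h).mono <|
    Icc_subset_Icc (by omega) (by omega)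

theorem isOpen_setOf_window_eq (N : ℕ) (u : Discontinuum A Q B) :
    IsOpen {v | window N v = window N u} := by
  let _ : TopologicalSpace (A ⊕ Q ⊕ B) := ⊥
  have _ : DiscreteTopology (A ⊕ Q ⊕ B) := ⟨rfl⟩
  simp only [window_eq_window_iff, EqOn, ofPred_forall]
  refine (finite_Icc _ _).isOpen_biInter fun j _ => ?_
  have hj : Continuous fun v : Discontinuum A Q B => v.1 j :=
    (continuous_apply j).comp continuous_subtype_val
  exact (isOpen_discrete {u.1 j}).preimage hj

theorem exists_window_subset_of_mem_nhds {u : Discontinuum A Q B} {s : Set (Discontinuum A Q B)}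
    (hs : s ∈ 𝓝 u) : ∃ N, {v | window N v = window N u} ⊆ s := by
  let _ : TopologicalSpace (A ⊕ Q ⊕ B) := ⊥
  have _ : DiscreteTopology (A ⊕ Q ⊕ B) := ⟨rfl⟩
  obtain ⟨t, ht, hts⟩ := (mem_nhds_subtype _ _ _).mp hs
  rw [nhds_pi] at ht
  obtain ⟨I, hI, c, hc, hIc⟩ := Filter.mem_pi.mp ht
  obtain ⟨N, hN⟩ := (hI.image Int.natAbs).bddAbove
  refine ⟨N, fun v hv => hts (hIc fun j hj => ?_)⟩
  have hjN : j ∈ Icc (-(N : ℤ)) N := by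
    have := hN (mem_image_of_mem _ hj)
    constructor <;> omega
  rw [window_eq_window_iff.mp hv hjN]
  exact mem_of_mem_nhds (hc j)

variable (fA : Q × A → Q) (fB : Q → B)

theorem autMap_val_of_pos {j : ℤ} (hj : 0 < j) (u : Discontinuum A Q B) :
    (autMap fA fB u).1 j = u.1 (j + 1) := by
  simp only [autMap, if_neg (show j ≠ -1 by omega), if_neg hj.ne']

theorem autMap_eqOn {S : Set ℤ} (h0 : 0 ∈ S) (h1 : 1 ∈ S) {u v : Discontinuum A Q B}
    (h : EqOn u.1 v.1 S) : EqOn (autMap fA fB u).1 (autMap fA fB v).1 ((· + 1) ⁻¹' S) := by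
  have hstate : u.state = v.state := by simpa [val_zero] using h h0
  have hinput : u.input = v.input := by simpa [val_one] using h h1
  intro j hj
  simp only [autMap]
  split_ifs
  · rw [hstate]
  · rw [hstate, hinput]
  · exact h hj

theorem autMap_iterate_eqOn_Ici {N : ℕ} {u v : Discontinuum A Q B}
    (h : EqOn u.1 v.1 (Ici (-(N : ℤ)))) (k : ℕ) :
    EqOn ((autMap fA fB)^[k] u).1 ((autMap fA fB)^[k] v).1 (Ici (-(N : ℤ))) := by
  induction k generalizing u v with
  | zero => exact h
  | succ k ih =>
    simp only [iterate_succ_apply]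
    refine ih ((autMap_eqOn fA fB (by simp) (by simp) h).mono fun j hj => ?_)
    simp only [mem_Ici, mem_preimage] at hj ⊢
    omega

theorem isMarkov_window (N : ℕ) : IsMarkov (window N) (autMap (A := A) fA fB) := by
  intro x y h
  let z : Discontinuum A Q B := ⟨fun j => if j ≤ N + 1 then y.1 j else x.1 (j - 1), by
    refine ⟨fun j hj => ?_, ?_, fun j hj => ?_⟩ <;> dsimp only
    · split_ifs
      · exact y.2.1 j hj
      · exact x.2.1 (j - 1) (by omega)
    · rw [if_pos (by omega)]
      exact y.2.2.1
    · rw [if_pos (by omega)]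
      exact y.2.2.2 j hj⟩
  have hzy : EqOn z.1 y.1 (Iic (N + 1)) := fun j hj => if_pos hj
  have hzx : EqOn (autMap fA fB z).1 x.1 (Ici (-(N : ℤ))) := by
    intro j hj
    rcases le_or_gt j N with hjN | hjN
    · have hfzy := autMap_eqOn fA fB (by simp; omega) (by simp) hzy
        (show j + 1 ∈ Iic ((N : ℤ) + 1) by simpa using hjN)
      exact hfzy.trans (window_eq_window_iff.mp h ⟨hj, hjN⟩)
    · rw [autMap_val_of_pos fA fB (by omega)]
      show (if j + 1 ≤ N + 1 then _ else _) = _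
      rw [if_neg (by omega), add_sub_cancel_right]
  refine ⟨z, window_eq_window_iff.mpr (hzy.mono fun j hj => ?_), fun k =>
    window_eq_window_iff.mpr ((autMap_iterate_eqOn_Ici fA fB hzx k).mono Icc_subset_Ici_self)⟩
  simp only [mem_Icc, mem_Iic] at hj ⊢
  omega

end Discontinuum

theorem clopenRegular_of_isFactorOfFiniteAutomaton_general {Y : Type*} [MetricSpace Y]
    (g : Y → Y) (hfac : IsFactorOfFiniteAutomaton g) : ClopenRegular g := by
  obtain ⟨A, Q, B, _, _, _, -, -, -, fA, fB, φ, hφ, hφsurj, hcomm⟩ := hfac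
  intro α hα hclopen _
  have : Finite α := hα.to_subtype
  obtain ⟨N, hN⟩ := exists_forall_mem_of_eq_of_isClopen Discontinuum.window
    Discontinuum.isOpen_setOf_window_eq (fun _ _ _ _ => Discontinuum.window_eq_window_of_le)
    (fun _ _ => Discontinuum.exists_window_subset_of_mem_nhds)
    (fun S : α => (hclopen S S.2).preimage hφ)
  have hsemiconj : Semiconj φ (autMap fA fB) g := fun x => (congrFun hcomm x).symm
  rw [genLanguage_eq_itineraryLanguage, ← image_univ_of_surjective hφsurj,
    itineraryLanguage_image_of_semiconj hsemiconj, ← preimage_univ (f := Discontinuum.window N)]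
  exact itineraryLanguage_isRegular hN (Discontinuum.isMarkov_window fA fB N) univ

/-- Any factor of a finite automaton is clopen-regular. -/
theorem clopenRegular_of_isFactorOfFiniteAutomaton {Y : Type*} [MetricSpace Y]
    [CompactSpace Y] (g : Y → Y) (hg : Continuous g)
    (hfac : IsFactorOfFiniteAutomaton g) : ClopenRegular g :=
  clopenRegular_of_isFactorOfFiniteAutomaton_general g hfac
end
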